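/- Let v_I ∈ ℝ^{n×p_I}, v_J ∈ ℝ^{n×p_J} with v_II := v_I⊤v_I and v_JJ := v_J⊤v_J positive definite, and let θ̄*_I ∈ ℝ^{p_I}, θ̄*_J ∈ ℝ^{p_J} be arbitrary vectors. Set μ := v_Iθ̄*_I + v_Jθ̄*_J ∈ ℝⁿ and define m(ρ) ∈ ℝ^{p_I} as the first block of G(ρ)⁻¹·(v_I⊤μ; v_J⊤μ), i.e., the conditional mean of the mutual-learning estimator θ̂_I(ρ) when Y has conditional mean μ given the latent representations. Then (i) m(0) = θ̄*_I + v_II⁻¹v_IJθ̄*_J, and (ii) the map ρ ↦ m(ρ) is differentiable at ρ = 0 with derivative m′(0) = v_II⁻¹v_IJv_JJ⁻¹v_JIθ̄*_I − θ̄*_I. -/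

import Mathlib

/-!
Write `G(ρ) = G₀ + ρ (G₀ - N)`, where `G₀ = diag(v_II, v_JJ)` and `N` is the off-diagonal part of
the full Gram matrix `G₀ + N`; the right-hand side is then `(G₀ + N) θ̄*` with
`θ̄* = (θ̄*_I; θ̄*_J)`. With `P = G₀⁻¹ N`, the value at `0` is `G₀⁻¹ (G₀ + N) θ̄* = (I + P) θ̄*`,
and since the derivative of `ρ ↦ G(ρ)⁻¹` at `0` is `-G₀⁻¹ (G₀ - N) G₀⁻¹`, the derivative of the
solution is `-(I - P)(I + P) θ̄* = P² θ̄* - θ̄*`. The first blocks of `P θ̄*` and `P² θ̄*` are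
`v_II⁻¹ v_IJ θ̄*_J` and `v_II⁻¹ v_IJ v_JJ⁻¹ v_JI θ̄*_I`.
-/

open Matrix

/-- The block matrix `G(ρ) = [[(1+ρ)v_II, −ρ v_IJ], [−ρ v_JI, (1+ρ)v_JJ]]`. -/
def mlG {n pI pJ : ℕ} (vI : Matrix (Fin n) (Fin pI) ℝ)
    (vJ : Matrix (Fin n) (Fin pJ) ℝ) (ρ : ℝ) :
    Matrix (Fin pI ⊕ Fin pJ) (Fin pI ⊕ Fin pJ) ℝ :=
  Matrix.fromBlocks ((1 + ρ) • (vIᵀ * vI)) ((-ρ) • (vIᵀ * vJ))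
    ((-ρ) • (vJᵀ * vI)) ((1 + ρ) • (vJᵀ * vJ))

/-- The conditional mean `m(ρ)`: the first block of `G(ρ)⁻¹ (v_Iᵀ μ; v_Jᵀ μ)`, where
`μ = v_I θ̄*_I + v_J θ̄*_J`. -/
noncomputable def condMeanI {n pI pJ : ℕ} (vI : Matrix (Fin n) (Fin pI) ℝ)
    (vJ : Matrix (Fin n) (Fin pJ) ℝ) (θbI : Fin pI → ℝ) (θbJ : Fin pJ → ℝ)
    (ρ : ℝ) : Fin pI → ℝ :=
  fun i => ((mlG vI vJ ρ)⁻¹ *ᵥ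
    Sum.elim (vIᵀ *ᵥ (vI *ᵥ θbI + vJ *ᵥ θbJ)) (vJᵀ *ᵥ (vI *ᵥ θbI + vJ *ᵥ θbJ))) (Sum.inl i)

namespace Matrix

variable {ι : Type*} [Fintype ι] [DecidableEq ι]

section Algebra

variable {R : Type*} [CommRing R]

theorem inv_mulVec_add_mulVec_self {D : Matrix ι ι R} (hD : IsUnit D) (N : Matrix ι ι R)
    (x : ι → R) : D⁻¹ *ᵥ ((D + N) *ᵥ x) = x + D⁻¹ *ᵥ (N *ᵥ x) := by
  rw [add_mulVec, mulVec_add, mulVec_mulVec, nonsing_inv_mul _ ((isUnit_iff_isUnit_det D).1 hD),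
    one_mulVec]

theorem inv_mulVec_sub_mulVec_self {D : Matrix ι ι R} (hD : IsUnit D) (N : Matrix ι ι R)
    (x : ι → R) : D⁻¹ *ᵥ ((D - N) *ᵥ x) = x - D⁻¹ *ᵥ (N *ᵥ x) := by
  rw [sub_mulVec, mulVec_sub, mulVec_mulVec, nonsing_inv_mul _ ((isUnit_iff_isUnit_det D).1 hD),
    one_mulVec]

end Algebra

section Derivative

variable {𝕜 : Type*} [RCLike 𝕜]

-- `hasFDerivAt_ringInverse` needs a complete normed-ring structure on matrices; none of the
-- statements below depends on that choice.
attribute [local instance] Matrix.linftyOpNormedAddCommGroup Matrix.linftyOpNormedRing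
  Matrix.linftyOpNormedAlgebra

theorem hasDerivAt_inv_add_smul_mulVec {A : Matrix ι ι 𝕜} (hA : IsUnit A) (B : Matrix ι ι 𝕜)
    (c : ι → 𝕜) :
    HasDerivAt (fun t : 𝕜 => (A + t • B)⁻¹ *ᵥ c) (-(A⁻¹ *ᵥ (B *ᵥ (A⁻¹ *ᵥ c)))) 0 := by
  have hpath : HasDerivAt (fun t : 𝕜 => A + t • B) B 0 := by
    have h := ((hasDerivAt_id' (0 : 𝕜)).smul_const B).const_add A
    rw [one_smul] at h
    exact h
  have hinvA : HasFDerivAt (𝕜 := 𝕜) Ring.inverse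
      (-ContinuousLinearMap.mulLeftRight 𝕜 (Matrix ι ι 𝕜) A⁻¹ A⁻¹) (A + (0 : 𝕜) • B) := by
    rw [zero_smul, add_zero, ← hA.unit_spec]
    simpa only [coe_units_inv] using hasFDerivAt_ringInverse (𝕜 := 𝕜) hA.unit
  let L : Matrix ι ι 𝕜 →L[𝕜] ι → 𝕜 := LinearMap.toContinuousLinearMap ((mulVecBilin 𝕜 𝕜).flip c)
  have hfun : (fun t : 𝕜 => (A + t • B)⁻¹ *ᵥ c) = L ∘ Ring.inverse ∘ fun t => A + t • B := by
    ext t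
    simp [L, nonsing_inv_eq_ringInverse]
  rw [hfun]
  refine (L.hasFDerivAt.comp_hasDerivAt 0 (hinvA.comp_hasDerivAt 0 hpath)).congr_deriv ?_
  change (-(A⁻¹ * B * A⁻¹)) *ᵥ c = _
  rw [neg_mulVec, mulVec_mulVec, mulVec_mulVec, Matrix.mul_assoc]

theorem hasDerivAt_inv_add_smul_sub_mulVec_add_mulVec {D : Matrix ι ι 𝕜} (hD : IsUnit D)
    (N : Matrix ι ι 𝕜) (x : ι → 𝕜) :
    HasDerivAt (fun t : 𝕜 => (D + t • (D - N))⁻¹ *ᵥ ((D + N) *ᵥ x))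
      (D⁻¹ *ᵥ (N *ᵥ (D⁻¹ *ᵥ (N *ᵥ x))) - x) 0 := by
  refine (hasDerivAt_inv_add_smul_mulVec hD (D - N) _).congr_deriv ?_
  rw [inv_mulVec_add_mulVec_self hD, inv_mulVec_sub_mulVec_self hD, mulVec_add, mulVec_add]
  abel

end Derivative

end Matrix

section Gram

variable {m p q R : Type*} [Fintype m] [CommRing R]

def gramDiag (vI : Matrix m p R) (vJ : Matrix m q R) : Matrix (p ⊕ q) (p ⊕ q) R :=
  fromBlocks (vIᵀ * vI) 0 0 (vJᵀ * vJ)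

def gramOffDiag (vI : Matrix m p R) (vJ : Matrix m q R) : Matrix (p ⊕ q) (p ⊕ q) R :=
  fromBlocks 0 (vIᵀ * vJ) (vJᵀ * vI) 0

variable [Fintype p] [Fintype q] (vI : Matrix m p R) (vJ : Matrix m q R)

theorem gram_mulVec_sumElim (x : p → R) (y : q → R) :
    (gramDiag vI vJ + gramOffDiag vI vJ) *ᵥ Sum.elim x y =
      Sum.elim (vIᵀ *ᵥ (vI *ᵥ x + vJ *ᵥ y)) (vJᵀ *ᵥ (vI *ᵥ x + vJ *ᵥ y)) := by
  simp [gramDiag, gramOffDiag, fromBlocks_add, fromBlocks_mulVec, mulVec_add, mulVec_mulVec]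

variable [DecidableEq p] [DecidableEq q]

theorem isUnit_gramDiag (hI : IsUnit (vIᵀ * vI)) (hJ : IsUnit (vJᵀ * vJ)) :
    IsUnit (gramDiag vI vJ) :=
  isUnit_fromBlocks_zero₂₁.2 ⟨hI, hJ⟩

theorem gramDiag_inv_mulVec_gramOffDiag (hI : IsUnit (vIᵀ * vI)) (hJ : IsUnit (vJᵀ * vJ))
    (x : p → R) (y : q → R) :
    (gramDiag vI vJ)⁻¹ *ᵥ (gramOffDiag vI vJ *ᵥ Sum.elim x y) =
      Sum.elim ((vIᵀ * vI)⁻¹ *ᵥ ((vIᵀ * vJ) *ᵥ y)) ((vJᵀ * vJ)⁻¹ *ᵥ ((vJᵀ * vI) *ᵥ x)) := by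
  rw [gramDiag, inv_fromBlocks_zero₂₁_of_isUnit_iff _ _ _ (iff_of_true hI hJ), gramOffDiag]
  simp [fromBlocks_mulVec]

end Gram

theorem mlG_eq_gramDiag_add_smul {n pI pJ : ℕ} (vI : Matrix (Fin n) (Fin pI) ℝ)
    (vJ : Matrix (Fin n) (Fin pJ) ℝ) (ρ : ℝ) :
    mlG vI vJ ρ = gramDiag vI vJ + ρ • (gramDiag vI vJ - gramOffDiag vI vJ) := by
  rw [mlG, gramDiag, gramOffDiag, sub_eq_add_neg, fromBlocks_neg, fromBlocks_add, fromBlocks_smul,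
    fromBlocks_add]
  congr 1 <;> module

theorem condMeanI_eq {n pI pJ : ℕ} (vI : Matrix (Fin n) (Fin pI) ℝ)
    (vJ : Matrix (Fin n) (Fin pJ) ℝ) (θbI : Fin pI → ℝ) (θbJ : Fin pJ → ℝ) (ρ : ℝ) :
    condMeanI vI vJ θbI θbJ ρ =
      ((gramDiag vI vJ + ρ • (gramDiag vI vJ - gramOffDiag vI vJ))⁻¹ *ᵥ
        ((gramDiag vI vJ + gramOffDiag vI vJ) *ᵥ Sum.elim θbI θbJ)) ∘ Sum.inl := by
  rw [gram_mulVec_sumElim, ← mlG_eq_gramDiag_add_smul]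
  rfl

/-- With `v_II` and `v_JJ` positive definite and arbitrary
`θ̄*_I ∈ ℝ^{p_I}`, `θ̄*_J ∈ ℝ^{p_J}`:
(i) `m(0) = θ̄*_I + v_II⁻¹ v_IJ θ̄*_J`, and
(ii) `ρ ↦ m(ρ)` is differentiable at `0` with derivative
`v_II⁻¹ v_IJ v_JJ⁻¹ v_JI θ̄*_I − θ̄*_I`. -/
theorem condMeanI_value_and_deriv_at_zero
    (n pI pJ : ℕ) (vI : Matrix (Fin n) (Fin pI) ℝ) (vJ : Matrix (Fin n) (Fin pJ) ℝ)
    (hI : (vIᵀ * vI).PosDef) (hJ : (vJᵀ * vJ).PosDef)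
    (θbI : Fin pI → ℝ) (θbJ : Fin pJ → ℝ) :
    condMeanI vI vJ θbI θbJ 0 = θbI + (vIᵀ * vI)⁻¹ *ᵥ ((vIᵀ * vJ) *ᵥ θbJ) ∧
    HasDerivAt (fun ρ => condMeanI vI vJ θbI θbJ ρ)
      ((vIᵀ * vI)⁻¹ *ᵥ ((vIᵀ * vJ) *ᵥ ((vJᵀ * vJ)⁻¹ *ᵥ ((vJᵀ * vI) *ᵥ θbI))) - θbI) 0 := by
  have hD := isUnit_gramDiag vI vJ hI.isUnit hJ.isUnit
  have hOff := gramDiag_inv_mulVec_gramOffDiag vI vJ hI.isUnit hJ.isUnit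
  refine ⟨?_, ?_⟩
  · rw [condMeanI_eq, zero_smul, add_zero, inv_mulVec_add_mulVec_self hD, hOff]
    rfl
  · simp_rw [condMeanI_eq]
    refine hasDerivAt_pi.2 fun i => ?_
    refine (hasDerivAt_pi.1 (hasDerivAt_inv_add_smul_sub_mulVec_add_mulVec hD _ _)
      (Sum.inl i)).congr_deriv ?_
    rw [hOff, hOff]
    rfl
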